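/- If H is a linear intersecting r-partite hypergraph with τ(H) = r in which every vertex has positive degree, then Δ(H) ≥ 7. -/
import Mathlib


/-- A set of vertices `C` is a cover of the hypergraph `H` (a finite set of lines)
if every line contains a vertex of `C`. -/
def IsCover {α : Type*} (H : Finset (Finset α)) (C : Finset α) : Prop :=
  ∀ e ∈ H, ∃ v ∈ e, v ∈ C

/-- The covering number: the minimum size of a cover. -/
noncomputable def coverNumber {α : Type*} (H : Finset (Finset α)) : ℕ :=
  sInf {n | ∃ C : Finset α, IsCover H C ∧ C.card = n}

/-- A matching is a set of pairwise disjoint lines of `H`. -/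
def IsMatching {α : Type*} (H M : Finset (Finset α)) : Prop :=
  M ⊆ H ∧ ∀ e ∈ M, ∀ f ∈ M, e ≠ f → Disjoint e f

/-- The matching number: the maximum size of a matching. -/
noncomputable def matchingNumber {α : Type*} (H : Finset (Finset α)) : ℕ :=
  sSup {n | ∃ M : Finset (Finset α), IsMatching H M ∧ M.card = n}

/-- An `r`-partite hypergraph on vertex set `Fin r × V` (side `i` consists of the
vertices with first coordinate `i`): every line has exactly one vertex in each side. -/
def Rpartite {r : ℕ} {V : Type*} (H : Finset (Finset (Fin r × V))) : Prop :=
  ∀ e ∈ H, ∀ i : Fin r, ∃! v : Fin r × V, v ∈ e ∧ v.1 = i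

/-- `H` is intersecting: every two lines share at least one vertex. -/
def Intersecting {α : Type*} (H : Finset (Finset α)) : Prop :=
  ∀ e ∈ H, ∀ f ∈ H, ∃ v, v ∈ e ∧ v ∈ f

/-- `H` is linear intersecting: every two distinct lines meet in exactly one vertex. -/
def LinearIntersecting {α : Type*} (H : Finset (Finset α)) : Prop :=
  ∀ e ∈ H, ∀ f ∈ H, e ≠ f → ∃! v, v ∈ e ∧ v ∈ f

/-- The vertices of `H` (i.e. the vertices of positive degree). -/
def vertexSet {α : Type*} [DecidableEq α] (H : Finset (Finset α)) : Finset α :=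
  H.sup id

/-- The degree of a vertex: the number of lines containing it. -/
def degree {α : Type*} [DecidableEq α] (H : Finset (Finset α)) (v : α) : ℕ :=
  (H.filter (fun e => v ∈ e)).card

/-- The maximum degree of `H`. -/
def maxDegree {α : Type*} [DecidableEq α] (H : Finset (Finset α)) : ℕ :=
  (vertexSet H).sup (degree H)

/-- Side `i` of an `r`-partite hypergraph: the vertices of `H` with first coordinate `i`. -/
def side {r : ℕ} {V : Type*} [DecidableEq V] (H : Finset (Finset (Fin r × V))) (i : Fin r) :
    Finset (Fin r × V) :=
  (vertexSet H).filter (fun v => v.1 = i)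


section Aux
variable {r : ℕ} {V : Type*} [DecidableEq V]
variable {H : Finset (Finset (Fin r × V))}

lemma mem_vertexSet_iff {x : Fin r × V} : x ∈ vertexSet H ↔ ∃ e ∈ H, x ∈ e := by
  simp [vertexSet, Finset.mem_sup, id]

lemma subset_vertexSet {e : Finset (Fin r × V)} (he : e ∈ H) : e ⊆ vertexSet H :=
  fun x hx => mem_vertexSet_iff.2 ⟨e, he, hx⟩

lemma card_line (hpart : Rpartite H) {e : Finset (Fin r × V)} (he : e ∈ H) : e.card = r := by
  have h : e.card = (Finset.univ : Finset (Fin r)).card := by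
    apply Finset.card_bij (fun v _ => v.1)
    · intro a _; exact Finset.mem_univ _
    · intro a ha b hb hab
      obtain ⟨v, hv, huniq⟩ := hpart e he a.1
      have h1 := huniq a ⟨ha, rfl⟩
      have h2 := huniq b ⟨hb, hab.symm⟩
      rw [h1, h2]
    · intro i _
      obtain ⟨v, ⟨hv, hvi⟩, _⟩ := hpart e he i
      exact ⟨v, hv, hvi⟩
  simpa using h

lemma cover_ge (htau : coverNumber H = r) {C : Finset (Fin r × V)} (hC : IsCover H C) :
    r ≤ C.card := by
  exact le_of_eq_of_le htau.symm (Nat.sInf_le ⟨C, hC, rfl⟩)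

lemma H_nonempty (hr : 2 ≤ r) (htau : coverNumber H = r) : H.Nonempty := by
  rcases Finset.eq_empty_or_nonempty H with h | h
  · exfalso
    have hc : IsCover H (∅ : Finset (Fin r × V)) := by intro e he; rw [h] at he; simp at he
    have := cover_ge htau hc
    simp at this; omega
  · exact h

lemma inter_card_one (hlin : LinearIntersecting H) {e f : Finset (Fin r × V)}
    (he : e ∈ H) (hf : f ∈ H) (hef : e ≠ f) : (e ∩ f).card = 1 := by
  obtain ⟨z, ⟨hz1, hz2⟩, huniq⟩ := hlin e he f hf hef
  rw [Finset.card_eq_one]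
  refine ⟨z, ?_⟩
  ext w
  simp only [Finset.mem_inter, Finset.mem_singleton]
  constructor
  · rintro ⟨h1, h2⟩; exact huniq w ⟨h1, h2⟩
  · rintro rfl; exact ⟨hz1, hz2⟩

lemma not_star (hr : 2 ≤ r) (htau : coverNumber H = r) (v : Fin r × V) :
    ∃ g ∈ H, v ∉ g := by
  by_contra h
  push_neg at h
  have hc : IsCover H {v} := fun e he => ⟨v, h e he, Finset.mem_singleton_self v⟩
  have := cover_ge htau hc
  simp at this; omega

end Aux
section Aux2
set_option linter.unusedSectionVars false
variable {r : ℕ} {V : Type*} [DecidableEq V]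
variable {H : Finset (Finset (Fin r × V))}

lemma deg_ge_two (hr : 2 ≤ r) (hpart : Rpartite H) (hlin : LinearIntersecting H)
    (htau : coverNumber H = r) {x : Fin r × V} (hx : x ∈ vertexSet H) :
    2 ≤ degree H x := by
  obtain ⟨e₀, he₀, hxe₀⟩ := mem_vertexSet_iff.1 hx
  by_contra hd
  push_neg at hd
  -- the only line through x is e₀
  have honly : ∀ f ∈ H, x ∈ f → f = e₀ := by
    intro f hf hxf
    have h1 : f ∈ H.filter (fun e => x ∈ e) := Finset.mem_filter.2 ⟨hf, hxf⟩
    have h2 : e₀ ∈ H.filter (fun e => x ∈ e) := Finset.mem_filter.2 ⟨he₀, hxe₀⟩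
    have hcard : (H.filter (fun e => x ∈ e)).card ≤ 1 := by
      unfold degree at hd; omega
    exact Finset.card_le_one.1 hcard f h1 e₀ h2
  have hcov : IsCover H (e₀.erase x) := by
    intro f hf
    by_cases hxf : x ∈ f
    · have hfe := honly f hf hxf
      subst hfe
      have hc : 2 ≤ f.card := by rw [card_line hpart hf]; exact hr
      obtain ⟨y, hy, hyx⟩ := Finset.exists_mem_ne (show 1 < f.card by omega) x
      exact ⟨y, hy, Finset.mem_erase.2 ⟨hyx, hy⟩⟩
    · have hfe : f ≠ e₀ := fun h => hxf (h ▸ hxe₀)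
      obtain ⟨z, ⟨hz1, hz2⟩, _⟩ := hlin f hf e₀ he₀ hfe
      have hzx : z ≠ x := fun h => hxf (h ▸ hz1)
      exact ⟨z, hz1, Finset.mem_erase.2 ⟨hzx, hz2⟩⟩
  have := cover_ge htau hcov
  rw [Finset.card_erase_of_mem hxe₀, card_line hpart he₀] at this
  omega

lemma double_count (A : Finset (Fin r × V)) (B : Finset (Finset (Fin r × V))) :
    ∑ x ∈ A, (B.filter (fun e => x ∈ e)).card = ∑ e ∈ B, (A.filter (fun x => x ∈ e)).card := by
  simp only [Finset.card_filter]
  exact Finset.sum_comm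

lemma filter_vertexSet_eq {e : Finset (Fin r × V)} (he : e ∈ H) :
    (vertexSet H).filter (fun x => x ∈ e) = e := by
  ext x
  simp only [Finset.mem_filter]
  exact ⟨fun h => h.2, fun h => ⟨subset_vertexSet he h, h⟩⟩

lemma sum_deg (hpart : Rpartite H) :
    ∑ x ∈ vertexSet H, degree H x = H.card * r := by
  unfold degree
  rw [double_count]
  rw [Finset.sum_congr rfl (fun e he => by rw [filter_vertexSet_eq he, card_line hpart he])]
  simp [Finset.sum_const, mul_comm]

lemma sum_deg_on_line (hpart : Rpartite H) (hlin : LinearIntersecting H)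
    {e : Finset (Fin r × V)} (he : e ∈ H) :
    ∑ x ∈ e, degree H x = (H.erase e).card + r := by
  unfold degree
  rw [double_count]
  have h1 : ∀ f ∈ H, (e.filter (fun x => x ∈ f)).card = (e ∩ f).card := by
    intro f _; congr 1
  rw [Finset.sum_congr rfl h1]
  rw [← Finset.sum_erase_add H _ he]
  have h2 : ∀ f ∈ H.erase e, (e ∩ f).card = 1 := by
    intro f hf
    have hfH := Finset.mem_of_mem_erase hf
    have hne : e ≠ f := (Finset.ne_of_mem_erase hf).symm
    exact inter_card_one hlin he hfH hne
  rw [Finset.sum_congr rfl h2, Finset.sum_const, smul_eq_mul, mul_one]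
  congr 1
  rw [Finset.inter_self, card_line hpart he]

lemma sum_deg_sq (hpart : Rpartite H) (hlin : LinearIntersecting H) :
    ∑ x ∈ vertexSet H, (degree H x)^2 + H.card = H.card * H.card + H.card * r := by
  have key : ∑ x ∈ vertexSet H, (degree H x)^2
      = ∑ e ∈ H, ((H.erase e).card + r) := by
    have h1 : ∀ x ∈ vertexSet H, (degree H x)^2
        = ∑ e ∈ H, (if x ∈ e then degree H x else 0) := by
      intro x hx
      rw [← Finset.sum_filter, Finset.sum_const, smul_eq_mul, pow_two]
      rfl
    rw [Finset.sum_congr rfl h1, Finset.sum_comm]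
    apply Finset.sum_congr rfl
    intro e he
    rw [← Finset.sum_filter, filter_vertexSet_eq he]
    exact sum_deg_on_line hpart hlin he
  rw [key, Finset.sum_add_distrib, Finset.sum_const, smul_eq_mul]
  have h3 : ∀ e ∈ H, (H.erase e).card = H.card - 1 := by
    intro e he; rw [Finset.card_erase_of_mem he]
  rw [Finset.sum_congr rfl h3, Finset.sum_const, smul_eq_mul]
  rcases Finset.eq_empty_or_nonempty H with h | h
  · simp [h]
  · have : 1 ≤ H.card := Finset.card_pos.2 h
    have : H.card * (H.card - 1) + H.card = H.card * H.card := by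
      cases' Nat.exists_eq_add_of_le this with k hk
      have hk' : 1 + k - 1 = k := by omega
      rw [hk, hk']; ring
    omega

lemma n_ge_r_sq (hpart : Rpartite H) (htau : coverNumber H = r) :
    r * r ≤ (vertexSet H).card := by
  have hfib : (vertexSet H).card
      = ∑ i : Fin r, ((vertexSet H).filter (fun v => v.1 = i)).card :=
    Finset.card_eq_sum_card_fiberwise (fun x _ => Finset.mem_univ x.1)
  have hside : ∀ i : Fin r, r ≤ ((vertexSet H).filter (fun v => v.1 = i)).card := by
    intro i
    apply cover_ge htau
    intro e he
    obtain ⟨v, ⟨hv, hvi⟩, _⟩ := hpart e he i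
    exact ⟨v, hv, Finset.mem_filter.2 ⟨subset_vertexSet he hv, hvi⟩⟩
  calc r * r = ∑ _i : Fin r, r := by simp [mul_comm]
    _ ≤ _ := by rw [hfib]; exact Finset.sum_le_sum (fun i _ => hside i)

end Aux2
section Aux3
set_option linter.unusedSectionVars false
variable {r : ℕ} {V : Type*} [DecidableEq V]
variable {H : Finset (Finset (Fin r × V))}

lemma pencil_term_le (hlin : LinearIntersecting H) {v : Fin r × V}
    {g : Finset (Fin r × V)} (hg : g ∈ H) (hvg : v ∉ g) {z : Fin r × V} (hz : z ∈ g) :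
    ((H.filter (fun e => v ∈ e)).filter (fun e => z ∈ e)).card ≤ 1 := by
  apply Finset.card_le_one.2
  intro e he e' he'
  simp only [Finset.mem_filter] at he he'
  obtain ⟨⟨heH, hve⟩, hze⟩ := he
  obtain ⟨⟨heH', hve'⟩, hze'⟩ := he'
  by_contra hne
  have hcard := inter_card_one hlin heH heH' hne
  have h1 : z ∈ e ∩ e' := Finset.mem_inter.2 ⟨hze, hze'⟩
  have h2 : v ∈ e ∩ e' := Finset.mem_inter.2 ⟨hve, hve'⟩
  have : z = v := Finset.card_le_one.1 (le_of_eq hcard) z h1 v h2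
  exact hvg (this ▸ hz)

lemma pencil_sum (hpart : Rpartite H) (hlin : LinearIntersecting H) {v : Fin r × V}
    {g : Finset (Fin r × V)} (hg : g ∈ H) (hvg : v ∉ g) :
    degree H v = ∑ z ∈ g, ((H.filter (fun e => v ∈ e)).filter (fun e => z ∈ e)).card := by
  have h := double_count g (H.filter (fun e => v ∈ e))
  have h2 : ∀ e ∈ H.filter (fun e => v ∈ e), (g.filter (fun x => x ∈ e)).card = 1 := by
    intro e he
    simp only [Finset.mem_filter] at he
    have hne : e ≠ g := fun hh => hvg (hh ▸ he.2)
    have h1 : g.filter (fun x => x ∈ e) = e ∩ g := by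
      ext w; simp only [Finset.mem_filter, Finset.mem_inter]; tauto
    rw [h1, inter_card_one hlin he.1 hg hne]
  rw [Finset.sum_congr rfl h2, Finset.sum_const, smul_eq_mul, mul_one] at h
  exact h.symm

lemma deg_le_r (hr : 2 ≤ r) (hpart : Rpartite H) (hlin : LinearIntersecting H)
    (htau : coverNumber H = r) (v : Fin r × V) : degree H v ≤ r := by
  obtain ⟨g, hg, hvg⟩ := not_star hr htau v
  rw [pencil_sum hpart hlin hg hvg]
  calc ∑ z ∈ g, ((H.filter (fun e => v ∈ e)).filter (fun e => z ∈ e)).card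
      ≤ ∑ _z ∈ g, 1 := Finset.sum_le_sum (fun z hz => pencil_term_le hlin hg hvg hz)
    _ = r := by rw [Finset.sum_const, smul_eq_mul, mul_one, card_line hpart hg]

lemma deg_ne_r (hr : 2 ≤ r) (hpart : Rpartite H) (hlin : LinearIntersecting H)
    (htau : coverNumber H = r) (v : Fin r × V) : degree H v ≠ r := by
  intro hdeg
  set P := H.filter (fun e => v ∈ e) with hP
  have hPcard : P.card = r := hdeg
  -- every line avoiding v is entirely covered by the pencil
  have hclaim : ∀ g ∈ H, v ∉ g → ∀ u ∈ g, ∃ e ∈ P, u ∈ e := by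
    intro g hg hvg u hu
    by_contra hno
    push_neg at hno
    have hcu : (P.filter (fun e => u ∈ e)).card = 0 := by
      rw [Finset.card_eq_zero]
      ext e; simp only [Finset.mem_filter, Finset.notMem_empty, iff_false]
      rintro ⟨heP, hue⟩
      exact hno e heP hue
    have hsum := pencil_sum hpart hlin hg hvg
    rw [← hP] at hsum
    rw [hdeg] at hsum
    rw [← Finset.sum_erase_add g _ hu, hcu, add_zero] at hsum
    have hle : ∑ z ∈ g.erase u, (P.filter (fun e => z ∈ e)).card ≤ ∑ _z ∈ g.erase u, 1 :=
      Finset.sum_le_sum (fun z hz => pencil_term_le hlin hg hvg (Finset.mem_of_mem_erase hz))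
    rw [Finset.sum_const, smul_eq_mul, mul_one, Finset.card_erase_of_mem hu,
      card_line hpart hg] at hle
    omega
  -- hence the vertex set is small
  have hsub : vertexSet H ⊆ insert v (P.biUnion (fun e => e.erase v)) := by
    intro x hx
    obtain ⟨g, hg, hxg⟩ := mem_vertexSet_iff.1 hx
    by_cases hxv : x = v
    · rw [hxv]; exact Finset.mem_insert_self v _
    · have : ∃ e ∈ P, x ∈ e := by
        by_cases hvg : v ∈ g
        · exact ⟨g, Finset.mem_filter.2 ⟨hg, hvg⟩, hxg⟩
        · exact hclaim g hg hvg x hxg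
      obtain ⟨e, heP, hxe⟩ := this
      exact Finset.mem_insert_of_mem
        (Finset.mem_biUnion.2 ⟨e, heP, Finset.mem_erase.2 ⟨hxv, hxe⟩⟩)
  have hcard : (vertexSet H).card ≤ 1 + r * (r - 1) := by
    calc (vertexSet H).card ≤ (insert v (P.biUnion (fun e => e.erase v))).card :=
          Finset.card_le_card hsub
      _ ≤ 1 + (P.biUnion (fun e => e.erase v)).card := by
          rw [add_comm]; exact Finset.card_insert_le _ _
      _ ≤ 1 + ∑ e ∈ P, (e.erase v).card := by
          exact Nat.add_le_add_left (Finset.card_biUnion_le) 1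
      _ ≤ 1 + r * (r - 1) := by
          have : ∀ e ∈ P, (e.erase v).card = r - 1 := by
            intro e heP
            have he := Finset.mem_filter.1 heP
            rw [Finset.card_erase_of_mem he.2, card_line hpart he.1]
          rw [Finset.sum_congr rfl this, Finset.sum_const, smul_eq_mul, hPcard]
  have hn := n_ge_r_sq hpart htau
  have hmul : r * (r - 1) + r = r * r := by
    cases' Nat.exists_eq_add_of_le (show 1 ≤ r by omega) with k hk
    have h1 : r - 1 = k := by omega
    rw [h1, hk]; ring
  omega

end Aux3
section Aux4
set_option linter.unusedSectionVars false
variable {r : ℕ} {V : Type*} [DecidableEq V]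
variable {H : Finset (Finset (Fin r × V))}

lemma other_line (hpart : Rpartite H) {f : Finset (Fin r × V)} (hf : f ∈ H)
    {x : Fin r × V} (hx : x ∈ f) (hdx : degree H x = 2) :
    ∃ g ∈ H, x ∈ g ∧ g ≠ f ∧ H.filter (fun e => x ∈ e) = {f, g} := by
  have hfmem : f ∈ H.filter (fun e => x ∈ e) := Finset.mem_filter.2 ⟨hf, hx⟩
  have hcard : (H.filter (fun e => x ∈ e)).card = 2 := hdx
  have : ((H.filter (fun e => x ∈ e)).erase f).Nonempty := by
    rw [← Finset.card_pos, Finset.card_erase_of_mem hfmem, hcard]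
    norm_num
  obtain ⟨g, hg⟩ := this
  have hgne : g ≠ f := Finset.ne_of_mem_erase hg
  have hgmem := Finset.mem_of_mem_erase hg
  have hgf := Finset.mem_filter.1 hgmem
  refine ⟨g, hgf.1, hgf.2, hgne, ?_⟩
  apply (Finset.eq_of_subset_of_card_le ?_ ?_).symm
  · intro e he
    rcases Finset.mem_insert.1 he with h | h
    · exact h ▸ hfmem
    · exact (Finset.mem_singleton.1 h) ▸ hgmem
  · rw [hcard, Finset.card_insert_of_notMem (by simp [hgne.symm]), Finset.card_singleton]

lemma two_deg2_false (hr3 : 3 ≤ r) (hpart : Rpartite H) (hlin : LinearIntersecting H)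
    (htau : coverNumber H = r) {f : Finset (Fin r × V)} (hf : f ∈ H)
    {x y : Fin r × V} (hx : x ∈ f) (hy : y ∈ f) (hxy : x ≠ y)
    (hdx : degree H x = 2) (hdy : degree H y = 2) : False := by
  obtain ⟨g, hgH, hxg, hgf, hgfilter⟩ := other_line hpart hf hx hdx
  obtain ⟨h, hhH, hyh, hhf, hhfilter⟩ := other_line hpart hf hy hdy
  have hgh : g ≠ h := by
    rintro rfl
    have hcard := inter_card_one hlin hgH hf hgf
    have h1 : x ∈ g ∩ f := Finset.mem_inter.2 ⟨hxg, hx⟩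
    have h2 : y ∈ g ∩ f := Finset.mem_inter.2 ⟨hyh, hy⟩
    exact hxy (Finset.card_le_one.1 (le_of_eq hcard) x h1 y h2)
  obtain ⟨z, ⟨hzg, hzh⟩, _⟩ := hlin g hgH h hhH hgh
  have hzf : z ∉ f := by
    intro hzf
    have hcard := inter_card_one hlin hgH hf hgf
    have hzx : z = x := Finset.card_le_one.1 (le_of_eq hcard) z
      (Finset.mem_inter.2 ⟨hzg, hzf⟩) x (Finset.mem_inter.2 ⟨hxg, hx⟩)
    have hcard2 := inter_card_one hlin hhH hf hhf
    have : x = y := Finset.card_le_one.1 (le_of_eq hcard2) x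
      (Finset.mem_inter.2 ⟨hzx ▸ hzh, hx⟩) y (Finset.mem_inter.2 ⟨hyh, hy⟩)
    exact hxy this
  set C := insert z ((f.erase x).erase y) with hC
  have hcov : IsCover H C := by
    intro e heH
    by_cases hex : x ∈ e
    · have : e ∈ ({f, g} : Finset _) := hgfilter ▸ Finset.mem_filter.2 ⟨heH, hex⟩
      rcases Finset.mem_insert.1 this with hef | h'
      · have hne : ((f.erase x).erase y).Nonempty := by
          rw [← Finset.card_pos, Finset.card_erase_of_mem
            (Finset.mem_erase.2 ⟨hxy.symm, hy⟩), Finset.card_erase_of_mem hx,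
            card_line hpart hf]
          omega
        obtain ⟨w, hw⟩ := hne
        have hwf : w ∈ f := Finset.mem_of_mem_erase (Finset.mem_of_mem_erase hw)
        exact ⟨w, hef ▸ hwf, Finset.mem_insert_of_mem hw⟩
      · rw [Finset.mem_singleton.1 h']
        exact ⟨z, hzg, Finset.mem_insert_self _ _⟩
    · by_cases hey : y ∈ e
      · have : e ∈ ({f, h} : Finset _) := hhfilter ▸ Finset.mem_filter.2 ⟨heH, hey⟩
        rcases Finset.mem_insert.1 this with hef | h'
        · exact absurd (hef ▸ hx) hex
        · rw [Finset.mem_singleton.1 h']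
          exact ⟨z, hzh, Finset.mem_insert_self _ _⟩
      · have hef : e ≠ f := fun hh => hex (hh ▸ hx)
        obtain ⟨w, ⟨hwe, hwf⟩, _⟩ := hlin e heH f hf hef
        have hwx : w ≠ x := fun hh => hex (hh ▸ hwe)
        have hwy : w ≠ y := fun hh => hey (hh ▸ hwe)
        exact ⟨w, hwe, Finset.mem_insert_of_mem
          (Finset.mem_erase.2 ⟨hwy, Finset.mem_erase.2 ⟨hwx, hwf⟩⟩)⟩
  have hge := cover_ge htau hcov
  have hzC : z ∉ (f.erase x).erase y :=
    fun hh => hzf (Finset.mem_of_mem_erase (Finset.mem_of_mem_erase hh))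
  rw [hC, Finset.card_insert_of_notMem hzC, Finset.card_erase_of_mem
    (Finset.mem_erase.2 ⟨hxy.symm, hy⟩), Finset.card_erase_of_mem hx,
    card_line hpart hf] at hge
  omega

lemma t_bound (hr3 : 3 ≤ r) (hpart : Rpartite H) (hlin : LinearIntersecting H)
    (htau : coverNumber H = r) :
    2 * ((vertexSet H).filter (fun x => degree H x = 2)).card ≤ H.card := by
  set T := (vertexSet H).filter (fun x => degree H x = 2) with hT
  have h1 : ∑ x ∈ T, degree H x = 2 * T.card := by
    rw [Finset.sum_congr rfl (fun x hx => (Finset.mem_filter.1 hx).2)]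
    rw [Finset.sum_const, smul_eq_mul, mul_comm]
  have h2 : ∑ x ∈ T, degree H x = ∑ e ∈ H, (T.filter (fun x => x ∈ e)).card := by
    unfold degree; exact double_count T H
  have h3 : ∀ e ∈ H, (T.filter (fun x => x ∈ e)).card ≤ 1 := by
    intro e he
    apply Finset.card_le_one.2
    intro a ha b hb
    simp only [hT, Finset.mem_filter] at ha hb
    by_contra hab
    exact two_deg2_false hr3 hpart hlin htau he ha.2 hb.2 hab ha.1.2 hb.1.2
  calc 2 * T.card = ∑ e ∈ H, (T.filter (fun x => x ∈ e)).card := by rw [← h2, h1]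
    _ ≤ ∑ _e ∈ H, 1 := Finset.sum_le_sum h3
    _ = H.card := by simp

end Aux4
set_option maxHeartbeats 1000000 in
/-- If `H` is a linear intersecting `r`-partite hypergraph (`r ≥ 2`) with covering
number `r`, then its maximum degree is at least `7`. -/
theorem maxDegree_ge_seven {r : ℕ} {V : Type*} [DecidableEq V]
    (H : Finset (Finset (Fin r × V))) (hr : 2 ≤ r)
    (hpart : Rpartite H) (hlin : LinearIntersecting H) (htau : coverNumber H = r) :
    7 ≤ maxDegree H := by
  by_contra hlt
  push_neg at hlt
  obtain ⟨e0, he0⟩ := H_nonempty hr htau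
  have hm1 : 1 ≤ H.card := Finset.card_pos.2 ⟨e0, he0⟩
  have he0ne : e0.Nonempty := by
    rw [← Finset.card_pos, card_line hpart he0]; omega
  obtain ⟨x0, hx0⟩ := he0ne
  have hUne : (vertexSet H).Nonempty := ⟨x0, subset_vertexSet he0 hx0⟩
  obtain ⟨v, hvU, hvmax⟩ := Finset.exists_mem_eq_sup (vertexSet H) hUne (degree H)
  have hD2 : 2 ≤ maxDegree H := by
    show _ ≤ (vertexSet H).sup (degree H)
    rw [hvmax]
    exact deg_ge_two hr hpart hlin htau hvU
  have hDr : maxDegree H ≤ r := by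
    show (vertexSet H).sup (degree H) ≤ _
    rw [hvmax]
    exact deg_le_r hr hpart hlin htau v
  have hDner : maxDegree H ≠ r := by
    show (vertexSet H).sup (degree H) ≠ _
    rw [hvmax]
    exact deg_ne_r hr hpart hlin htau v
  have hr3 : 3 ≤ r := by omega
  have hdegle : ∀ x ∈ vertexSet H, degree H x ≤ maxDegree H :=
    fun x hx => Finset.le_sup hx
  have hdegge : ∀ x ∈ vertexSet H, 2 ≤ degree H x :=
    fun x hx => deg_ge_two hr hpart hlin htau hx
  have hF3 : r * r ≤ (vertexSet H).card := n_ge_r_sq hpart htau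
  have hF4 : 2 * ((vertexSet H).filter (fun x => degree H x = 2)).card ≤ H.card :=
    t_bound hr3 hpart hlin htau
  have hSd : ∑ x ∈ vertexSet H, degree H x = H.card * r := sum_deg hpart
  by_cases hD2' : maxDegree H = 2
  · -- all degrees equal 2
    have hall : (vertexSet H).filter (fun x => degree H x = 2) = vertexSet H := by
      apply Finset.filter_true_of_mem
      intro x hx
      have h1 := hdegle x hx
      have h2 := hdegge x hx
      omega
    have hsum2 : ∑ x ∈ vertexSet H, degree H x = 2 * (vertexSet H).card := by
      rw [Finset.sum_congr rfl (fun x hx => show degree H x = 2 by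
        have h1 := hdegle x hx; have h2 := hdegge x hx; omega)]
      rw [Finset.sum_const, smul_eq_mul, mul_comm]
    rw [hall] at hF4
    rw [hsum2] at hSd
    -- H.card * r = 2 * n ≤ H.card, r ≥ 3
    have h3 : H.card * 3 ≤ H.card * r := Nat.mul_le_mul_left _ hr3
    omega
  · have hD3 : 3 ≤ maxDegree H := by
      rcases Nat.lt_or_ge (maxDegree H) 3 with h | h
      · exfalso; apply hD2'; omega
      · exact h
    -- pointwise degree bound
    have key : ∀ x ∈ vertexSet H,
        (degree H x)^2 + 3 * maxDegree H ≤
          (maxDegree H + 3) * degree H x +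
            (if degree H x = 2 then maxDegree H - 2 else 0) := by
      intro x hx
      have h1 := hdegle x hx
      have h2 := hdegge x hx
      by_cases hx2 : degree H x = 2
      · rw [if_pos hx2, hx2]
        omega
      · rw [if_neg hx2]
        have h3 : 3 ≤ degree H x := by omega
        obtain ⟨a, ha⟩ := Nat.exists_eq_add_of_le h3
        obtain ⟨b, hb⟩ := Nat.exists_eq_add_of_le h1
        rw [ha] at hb ⊢
        rw [hb]
        ring_nf
        nlinarith [Nat.zero_le (a * b), Nat.zero_le a, Nat.zero_le b]
    have hsumle := Finset.sum_le_sum key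
    rw [Finset.sum_add_distrib, Finset.sum_add_distrib, Finset.sum_const, smul_eq_mul,
      ← Finset.mul_sum, hSd] at hsumle
    have hite : ∑ x ∈ vertexSet H, (if degree H x = 2 then maxDegree H - 2 else 0)
        = (maxDegree H - 2) * ((vertexSet H).filter (fun x => degree H x = 2)).card := by
      rw [← Finset.sum_filter, Finset.sum_const, smul_eq_mul, mul_comm]
    rw [hite] at hsumle
    have hS2 := sum_deg_sq hpart hlin
    -- abstract everything
    set D := maxDegree H with hDdef
    set m := H.card with hmdef
    set n := (vertexSet H).card with hndef
    set t := ((vertexSet H).filter (fun x => degree H x = 2)).card with htdef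
    set S := ∑ x ∈ vertexSet H, (degree H x)^2 with hSdef
    clear_value D m n t S
    have hD6 : D ≤ 6 := by omega
    have hrD : D + 1 ≤ r := by omega
    interval_cases D
    · zify at hsumle hS2 hF3 hF4 hrD hm1
      have key2 : 2*((m:ℤ)*(m:ℤ)) + 18*((r:ℤ)*(r:ℤ)) ≤ 10*((m:ℤ)*(r:ℤ)) + 3*(m:ℤ) := by
        nlinarith [hsumle, hS2, hF3, hF4]
      nlinarith [key2, sq_nonneg (4 * (m:ℤ) - (10 * (r:ℤ) + 3)),
        mul_nonneg (show (0:ℤ) ≤ (r:ℤ) - 4 by omega) (show (0:ℤ) ≤ (r:ℤ) by omega)]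
    · zify at hsumle hS2 hF3 hF4 hrD hm1
      have key2 : 2*((m:ℤ)*(m:ℤ)) + 24*((r:ℤ)*(r:ℤ)) ≤ 12*((m:ℤ)*(r:ℤ)) + 4*(m:ℤ) := by
        nlinarith [hsumle, hS2, hF3, hF4]
      nlinarith [key2, sq_nonneg (4 * (m:ℤ) - (12 * (r:ℤ) + 4)),
        mul_nonneg (show (0:ℤ) ≤ (r:ℤ) - 5 by omega) (show (0:ℤ) ≤ (r:ℤ) by omega)]
    · zify at hsumle hS2 hF3 hF4 hrD hm1
      have key2 : 2*((m:ℤ)*(m:ℤ)) + 30*((r:ℤ)*(r:ℤ)) ≤ 14*((m:ℤ)*(r:ℤ)) + 5*(m:ℤ) := by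
        nlinarith [hsumle, hS2, hF3, hF4]
      nlinarith [key2, sq_nonneg (4 * (m:ℤ) - (14 * (r:ℤ) + 5)),
        mul_nonneg (show (0:ℤ) ≤ (r:ℤ) - 6 by omega) (show (0:ℤ) ≤ (r:ℤ) by omega)]
    · zify at hsumle hS2 hF3 hF4 hrD hm1
      have key2 : 2*((m:ℤ)*(m:ℤ)) + 36*((r:ℤ)*(r:ℤ)) ≤ 16*((m:ℤ)*(r:ℤ)) + 6*(m:ℤ) := by
        nlinarith [hsumle, hS2, hF3, hF4]
      nlinarith [key2, sq_nonneg (4 * (m:ℤ) - (16 * (r:ℤ) + 6)),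
        mul_nonneg (show (0:ℤ) ≤ (r:ℤ) - 7 by omega) (show (0:ℤ) ≤ (r:ℤ) by omega)]
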